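/- For the double series S_{C1,C2}(x;q) = Σ_{m,n≥0} q^{B11·C(m+1,2)+B22·C(n+1,2)+B12·mn+C1·m+C2·n} x^{D1·m+D2·n} / ((q^{K1};q^{K1})_m (q^{K2};q^{K2})_n), and any positive integer γ, one has S_{C1,C2}(x) − S_{C1+K1,C2}(x) = x^{D1} q^{B11+C1} S_{C1+B11−γD1, C2+B12−γD2}(xq^γ). -/

import Mathlib

noncomputable section

/-- Base coefficient ring: formal Laurent series over ℚ (a field), so that
integer powers of `q` and inverses of Pochhammer symbols make sense. -/
abbrev R : Type := LaurentSeries ℚ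

/-- The formal variable `q`. -/
def q : R := HahnSeries.single 1 1

/-- The finite q-Pochhammer symbol `(a; b)_n = ∏_{j=1}^n (1 - a b^(j-1))`. -/
def poch (a b : R) (n : ℕ) : R := ∏ j ∈ Finset.range n, (1 - a * b ^ j)

/-- Formal substitution `x ↦ c·x` in a power series in `x` over `R`. -/
def subst (c : R) (f : PowerSeries R) : PowerSeries R :=
  PowerSeries.mk fun k => c ^ k * PowerSeries.coeff k f

/-- The double series `S_{C1,C2}(x;q)`, viewed as a power series in `x` over `R`:
the coefficient of `x^k` collects all `(m,n)` with `D1·m + D2·n = k`, each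
contributing `q^(B11·C(m+1,2)+B22·C(n+1,2)+B12·mn+C1·m+C2·n) / ((q^K1;q^K1)_m (q^K2;q^K2)_n)`. -/
def S (B11 B22 B12 C1 C2 : ℤ) (D1 D2 K1 K2 : ℕ) : PowerSeries R :=
  PowerSeries.mk fun k =>
    ∑ p ∈ (Finset.range (k+1) ×ˢ Finset.range (k+1)).filter
        (fun p => D1 * p.1 + D2 * p.2 = k),
      q ^ (B11 * ((p.1+1).choose 2 : ℤ) + B22 * ((p.2+1).choose 2 : ℤ)
            + B12 * (p.1 : ℤ) * (p.2 : ℤ) + C1 * (p.1 : ℤ) + C2 * (p.2 : ℤ))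
        * (poch (q ^ K1) (q ^ K1) p.1)⁻¹ * (poch (q ^ K2) (q ^ K2) p.2)⁻¹

/-!
Write `S_{C1,C2} = Σ_{m,n} t_{C1,C2}(m,n) x^(D1 m + D2 n)`. Since
`q^(C1 m) - q^((C1+K1) m) = q^(C1 m) (1 - q^(K1 m))` and `(q^K1;q^K1)_m = (q^K1;q^K1)_(m-1) (1 - q^(K1 m))`,
the term `t_{C1,C2}(m,n) - t_{C1+K1,C2}(m,n)` vanishes for `m = 0` and equals
`q^(B11+C1) t_{C1+B11,C2+B12}(m-1,n)` for `m ≥ 1`; shifting `m` gives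
`S_{C1,C2} - S_{C1+K1,C2} = x^D1 q^(B11+C1) S_{C1+B11,C2+B12}`. Finally `x ↦ x q^γ` turns
`S_{C1-γD1,C2-γD2}` into `S_{C1,C2}`, since it multiplies the `(m,n)` term by `q^(γ(D1 m + D2 n))`.
-/

open Finset
open PowerSeries (coeff coeff_mk coeff_X_pow_mul' coeff_C_mul)

lemma q_pow_eq_single (n : ℕ) : q ^ n = HahnSeries.single (n : ℤ) 1 := by
  rw [q, HahnSeries.single_pow, one_pow, nsmul_one]

lemma q_ne_zero : q ≠ 0 := by
  simp [q]

lemma one_sub_q_pow_ne_zero {n : ℕ} (hn : 0 < n) : (1 : R) - q ^ n ≠ 0 := by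
  intro h
  have h0 := congrArg (HahnSeries.coeff · 0) h
  have hn' : (0 : ℤ) ≠ n := by exact_mod_cast hn.ne
  simp [q_pow_eq_single, hn'] at h0

section Pochhammer

variable {K : ℕ}

lemma poch_succ (m : ℕ) :
    poch (q ^ K) (q ^ K) (m + 1) = poch (q ^ K) (q ^ K) m * (1 - q ^ (K * (m + 1))) := by
  rw [poch, prod_range_succ, poch, ← pow_mul, ← pow_add, mul_add_one, add_comm K]

lemma inv_poch_succ_mul (hK : 0 < K) (m : ℕ) :
    (poch (q ^ K) (q ^ K) (m + 1))⁻¹ * (1 - q ^ (K * (m + 1))) = (poch (q ^ K) (q ^ K) m)⁻¹ := by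
  rw [poch_succ, mul_inv, mul_assoc, inv_mul_cancel₀ (one_sub_q_pow_ne_zero (by positivity)),
    mul_one]

end Pochhammer

section WeightedAntidiagonal

def weightedAntidiagonal (D1 D2 k : ℕ) : Finset (ℕ × ℕ) :=
  (range (k + 1) ×ˢ range (k + 1)).filter fun p => D1 * p.1 + D2 * p.2 = k

variable {D1 D2 : ℕ}

lemma mem_weightedAntidiagonal (hD1 : 0 < D1) (hD2 : 0 < D2) {k : ℕ} {p : ℕ × ℕ} :
    p ∈ weightedAntidiagonal D1 D2 k ↔ D1 * p.1 + D2 * p.2 = k := by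
  have h1 : p.1 ≤ D1 * p.1 := Nat.le_mul_of_pos_left _ hD1
  have h2 : p.2 ≤ D2 * p.2 := Nat.le_mul_of_pos_left _ hD2
  simp only [weightedAntidiagonal, mem_filter, mem_product, mem_range]
  omega

lemma fst_eq_zero_of_mem_weightedAntidiagonal {k : ℕ} (hk : k < D1) {p : ℕ × ℕ}
    (hp : p ∈ weightedAntidiagonal D1 D2 k) : p.1 = 0 := by
  simp only [weightedAntidiagonal, mem_filter] at hp
  by_contra h
  have : D1 ≤ D1 * p.1 := Nat.le_mul_of_pos_right D1 (Nat.pos_of_ne_zero h)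
  omega

lemma sum_weightedAntidiagonal_add {M : Type*} [AddCommMonoid M] (hD1 : 0 < D1) (hD2 : 0 < D2)
    (f : ℕ × ℕ → M) (hf : ∀ n, f (0, n) = 0) (k : ℕ) :
    ∑ p ∈ weightedAntidiagonal D1 D2 (k + D1), f p =
      ∑ p ∈ weightedAntidiagonal D1 D2 k, f (p.1 + 1, p.2) := by
  rw [← sum_filter_of_ne (p := fun p => p.1 ≠ 0)
    fun p _ hp h => hp ((Prod.ext h rfl : p = (0, p.2)) ▸ hf p.2)]
  symm
  refine sum_nbij' (fun p => (p.1 + 1, p.2)) (fun p => (p.1 - 1, p.2)) ?_ ?_ ?_ ?_ fun _ _ => rfl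
  · rintro ⟨m, n⟩ hp
    simp only [mem_filter, mem_weightedAntidiagonal hD1 hD2] at hp ⊢
    rw [mul_add_one]
    omega
  · rintro ⟨_ | m, n⟩ hp <;> rw [mem_filter] at hp
    · exact absurd rfl hp.2
    · rw [mem_weightedAntidiagonal hD1 hD2, mul_add_one] at hp
      rw [mem_weightedAntidiagonal hD1 hD2]
      dsimp only at hp ⊢
      rw [Nat.add_sub_cancel]
      omega
  · intro p _
    simp
  · rintro ⟨_ | m, n⟩ hp <;> rw [mem_filter] at hp
    · exact absurd rfl hp.2
    · simp

end WeightedAntidiagonal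

section Terms

variable (B11 B22 B12 : ℤ) (K1 K2 : ℕ)

def term (C1 C2 : ℤ) (p : ℕ × ℕ) : R :=
  q ^ (B11 * ((p.1 + 1).choose 2 : ℤ) + B22 * ((p.2 + 1).choose 2 : ℤ)
        + B12 * (p.1 : ℤ) * (p.2 : ℤ) + C1 * (p.1 : ℤ) + C2 * (p.2 : ℤ))
    * (poch (q ^ K1) (q ^ K1) p.1)⁻¹ * (poch (q ^ K2) (q ^ K2) p.2)⁻¹

lemma coeff_S (C1 C2 : ℤ) (D1 D2 k : ℕ) :
    coeff k (S B11 B22 B12 C1 C2 D1 D2 K1 K2) =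
      ∑ p ∈ weightedAntidiagonal D1 D2 k, term B11 B22 B12 K1 K2 C1 C2 p := by
  rw [S, coeff_mk]
  rfl

lemma term_add (C1 C2 a b : ℤ) (p : ℕ × ℕ) :
    term B11 B22 B12 K1 K2 (C1 + a) (C2 + b) p =
      q ^ (a * p.1 + b * p.2) * term B11 B22 B12 K1 K2 C1 C2 p := by
  simp only [term, ← mul_assoc, ← zpow_add₀ q_ne_zero]
  congr 3
  ring

variable {K1}

lemma term_sub_term_add (C1 C2 : ℤ) (p : ℕ × ℕ) :
    term B11 B22 B12 K1 K2 C1 C2 p - term B11 B22 B12 K1 K2 (C1 + K1) C2 p =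
      term B11 B22 B12 K1 K2 C1 C2 p * (1 - q ^ (K1 * p.1)) := by
  have h := term_add B11 B22 B12 K1 K2 C1 C2 K1 0 p
  rw [add_zero, zero_mul, add_zero, ← Nat.cast_mul, zpow_natCast] at h
  rw [h]
  ring

lemma term_succ_mul (hK1 : 0 < K1) (C1 C2 : ℤ) (m n : ℕ) :
    term B11 B22 B12 K1 K2 C1 C2 (m + 1, n) * (1 - q ^ (K1 * (m + 1))) =
      q ^ (B11 + C1) * term B11 B22 B12 K1 K2 (C1 + B11) (C2 + B12) (m, n) := by
  have hchoose : ((m + 1 + 1).choose 2 : ℤ) = (m + 1).choose 2 + (m + 1) := by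
    rw [Nat.choose_succ_succ, Nat.choose_one_right]
    push_cast
    ring
  simp only [term, ← mul_assoc, ← zpow_add₀ q_ne_zero, ← inv_poch_succ_mul hK1 m]
  rw [hchoose]
  push_cast
  ring_nf

lemma pow_mul_term_sub {γ D1 D2 : ℕ} (C1 C2 : ℤ) (p : ℕ × ℕ) :
    (q ^ γ) ^ (D1 * p.1 + D2 * p.2) * term B11 B22 B12 K1 K2 (C1 - γ * D1) (C2 - γ * D2) p =
      term B11 B22 B12 K1 K2 C1 C2 p := by
  conv_rhs => rw [← sub_add_cancel C1 (γ * D1), ← sub_add_cancel C2 (γ * D2), term_add]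
  rw [← pow_mul, ← zpow_natCast]
  push_cast
  ring_nf

end Terms

variable {B11 B22 B12 : ℤ} {D1 D2 K1 K2 : ℕ}

theorem subst_S_sub (γ : ℕ) (C1 C2 : ℤ) :
    subst (q ^ γ) (S B11 B22 B12 (C1 - γ * D1) (C2 - γ * D2) D1 D2 K1 K2) =
      S B11 B22 B12 C1 C2 D1 D2 K1 K2 := by
  refine PowerSeries.ext fun k => ?_
  rw [subst, coeff_mk, coeff_S, coeff_S, mul_sum]
  refine sum_congr rfl fun p hp => ?_
  rw [← (mem_filter.1 hp).2, pow_mul_term_sub]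

theorem S_sub_S_add (hD1 : 0 < D1) (hD2 : 0 < D2) (hK1 : 0 < K1) (C1 C2 : ℤ) :
    S B11 B22 B12 C1 C2 D1 D2 K1 K2 - S B11 B22 B12 (C1 + K1) C2 D1 D2 K1 K2 =
      PowerSeries.X ^ D1 * PowerSeries.C (q ^ (B11 + C1)) *
        S B11 B22 B12 (C1 + B11) (C2 + B12) D1 D2 K1 K2 := by
  refine PowerSeries.ext fun k => ?_
  have hzero (n : ℕ) : term B11 B22 B12 K1 K2 C1 C2 (0, n) * (1 - q ^ (K1 * 0)) = 0 := by simp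
  simp only [map_sub, coeff_S, ← sum_sub_distrib, term_sub_term_add]
  rw [mul_assoc, coeff_X_pow_mul']
  split_ifs with hk
  · obtain ⟨j, rfl⟩ := Nat.exists_eq_add_of_le' hk
    rw [sum_weightedAntidiagonal_add hD1 hD2 _ hzero, Nat.add_sub_cancel, coeff_C_mul, coeff_S,
      mul_sum]
    exact sum_congr rfl fun p _ => term_succ_mul B11 B22 B12 K2 hK1 C1 C2 p.1 p.2
  · refine sum_eq_zero fun p hp => ?_
    rw [← Prod.mk.eta (p := p), fst_eq_zero_of_mem_weightedAntidiagonal (not_le.1 hk) hp]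
    exact hzero p.2

theorem first_primary_contiguous_relation_general
    (B11 B22 B12 C1 C2 : ℤ) (D1 D2 K1 K2 γ : ℕ)
    (hD1 : 0 < D1) (hD2 : 0 < D2) (hK1 : 0 < K1) :
    S B11 B22 B12 C1 C2 D1 D2 K1 K2 - S B11 B22 B12 (C1 + K1) C2 D1 D2 K1 K2
      = PowerSeries.X ^ D1 * PowerSeries.C (q ^ (B11 + C1)) *
          subst (q ^ γ)
            (S B11 B22 B12 (C1 + B11 - (γ : ℤ) * D1) (C2 + B12 - (γ : ℤ) * D2)
              D1 D2 K1 K2) := by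
  rw [subst_S_sub, S_sub_S_add hD1 hD2 hK1]

theorem first_primary_contiguous_relation
    (B11 B22 B12 C1 C2 : ℤ) (D1 D2 K1 K2 γ : ℕ)
    (hD1 : 0 < D1) (hD2 : 0 < D2) (hK1 : 0 < K1) (hK2 : 0 < K2) (hγ : 0 < γ) :
    S B11 B22 B12 C1 C2 D1 D2 K1 K2 - S B11 B22 B12 (C1 + K1) C2 D1 D2 K1 K2
      = PowerSeries.X ^ D1 * PowerSeries.C (q ^ (B11 + C1)) *
          subst (q ^ γ)
            (S B11 B22 B12 (C1 + B11 - (γ : ℤ) * D1) (C2 + B12 - (γ : ℤ) * D2)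
              D1 D2 K1 K2) :=
  first_primary_contiguous_relation_general B11 B22 B12 C1 C2 D1 D2 K1 K2 γ hD1 hD2 hK1
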